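/- Let c, d ∈ ℝ³, set v = c × d (cross product), and set b = (v₂v₃, v₁v₃, v₁v₂) ∈ ℝ³. Then: (1) c₁b₂b₃ + c₂b₁b₃ + c₃b₁b₂ = 0 and d₁b₂b₃ + d₂b₁b₃ + d₃b₁b₂ = 0; (2) if moreover v ≠ 0 and w ∈ ℝ³ has all three coordinates nonzero and satisfies c₁w₂w₃ + c₂w₁w₃ + c₃w₁w₂ = 0 and d₁w₂w₃ + d₂w₁w₃ + d₃w₁w₂ = 0, then there exists a nonzero real scalar λ with w = λ·b. -/

import Mathlib

/-!
A conic through the three coordinate points is the pull-back of a line under the quadratic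
Cremona transformation: `c₁x₂x₃ + c₂x₁x₃ + c₃x₁x₂ = c ⬝ᵥ f_q(x)`. Since `f_q ∘ f_q` is
multiplication by `x₁x₂x₃`, the point `f_q(c × d)` lies on both conics. Conversely, for a common
point `w` with nonzero coordinates, `f_q(w)` lies on both lines `c ⬝ᵥ y = 0` and `d ⬝ᵥ y = 0`, so it
is a multiple `μ • (c × d)`; applying `f_q` once more gives `w₁w₂w₃ • w = μ² • f_q(c × d)`.
-/

open Matrix

/-- The cross product on ℝ³. -/
def cross3 (u v : Fin 3 → ℝ) : Fin 3 → ℝ :=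
  ![u 1 * v 2 - u 2 * v 1, u 2 * v 0 - u 0 * v 2, u 0 * v 1 - u 1 * v 0]

theorem cross3_eq_crossProduct (u v : Fin 3 → ℝ) : cross3 u v = u ⨯₃ v :=
  (cross_apply u v).symm

theorem exists_smul_crossProduct_eq_of_dotProduct_eq_zero {F : Type*} [Field F]
    {c d x : Fin 3 → F} (hcd : c ⨯₃ d ≠ 0) (hc : c ⬝ᵥ x = 0) (hd : d ⬝ᵥ x = 0) :
    ∃ μ : F, μ • (c ⨯₃ d) = x := by
  have hcross : c ⨯₃ d ⨯₃ x = 0 := by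
    rw [cross_cross_eq_smul_sub_smul, hc, hd, zero_smul, zero_smul, sub_zero]
  by_contra! h
  exact crossProduct_ne_zero_iff_linearIndependent.mpr
    ((LinearIndependent.pair_iff' hcd).mpr h) hcross

section Cremona

variable {R : Type*} [CommRing R]

def quadraticCremona (x : Fin 3 → R) : Fin 3 → R :=
  ![x 1 * x 2, x 0 * x 2, x 0 * x 1]

/-- The quadratic form of the conic through `e₁, e₂, e₃` with coefficient vector `c`. -/
def conicForm (c x : Fin 3 → R) : R :=
  c 0 * x 1 * x 2 + c 1 * x 0 * x 2 + c 2 * x 0 * x 1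

theorem conicForm_eq_dotProduct_quadraticCremona (c x : Fin 3 → R) :
    conicForm c x = c ⬝ᵥ quadraticCremona x := by
  simp only [conicForm, quadraticCremona, vec3_dotProduct, cons_val_zero, cons_val_one,
    cons_val_two, Nat.succ_eq_add_one, Nat.reduceAdd, head_cons, tail_cons]
  ring

theorem quadraticCremona_quadraticCremona (x : Fin 3 → R) :
    quadraticCremona (quadraticCremona x) = (x 0 * x 1 * x 2) • x := by
  ext i
  fin_cases i <;>
  · simp only [quadraticCremona, Fin.isValue, Fin.zero_eta, Fin.mk_one, Fin.reduceFinMk,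
      cons_val_zero, cons_val_one, cons_val, Pi.smul_apply, smul_eq_mul]
    ring

theorem quadraticCremona_smul (a : R) (x : Fin 3 → R) :
    quadraticCremona (a • x) = a ^ 2 • quadraticCremona x := by
  ext i
  fin_cases i <;>
  · simp only [quadraticCremona, Fin.isValue, Fin.zero_eta, Fin.mk_one, Fin.reduceFinMk,
      cons_val_zero, cons_val_one, cons_val, Pi.smul_apply, smul_eq_mul]
    ring

theorem conicForm_quadraticCremona (c x : Fin 3 → R) :
    conicForm c (quadraticCremona x) = x 0 * x 1 * x 2 * (c ⬝ᵥ x) := by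
  rw [conicForm_eq_dotProduct_quadraticCremona, quadraticCremona_quadraticCremona,
    dotProduct_smul, smul_eq_mul]

theorem quadraticCremona_ne_zero [NoZeroDivisors R] {w : Fin 3 → R} (hw : ∀ i, w i ≠ 0) :
    quadraticCremona w ≠ 0 := fun h =>
  mul_ne_zero (hw 1) (hw 2) (by simpa [quadraticCremona] using congrFun h 0)

end Cremona

/-- Coordinate form of Lemma 23: two conics through the coordinate points, with
coefficient vectors `c` and `d`, meet in the fourth point
`f_q(c × d) = (v₂v₃, v₁v₃, v₁v₂)` where `v = c × d`; and (2) this fourth point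
is the unique common point having all coordinates nonzero. -/
theorem fourth_intersection_of_conics (c d : Fin 3 → ℝ) :
    let v := cross3 c d
    let b : Fin 3 → ℝ := ![v 1 * v 2, v 0 * v 2, v 0 * v 1]
    (c 0 * b 1 * b 2 + c 1 * b 0 * b 2 + c 2 * b 0 * b 1 = 0 ∧
     d 0 * b 1 * b 2 + d 1 * b 0 * b 2 + d 2 * b 0 * b 1 = 0) ∧
    (v ≠ 0 → ∀ w : Fin 3 → ℝ, (∀ i, w i ≠ 0) →
      c 0 * w 1 * w 2 + c 1 * w 0 * w 2 + c 2 * w 0 * w 1 = 0 →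
      d 0 * w 1 * w 2 + d 1 * w 0 * w 2 + d 2 * w 0 * w 1 = 0 →
      ∃ lam : ℝ, lam ≠ 0 ∧ w = lam • b) := by
  intro v b
  change (conicForm c (quadraticCremona v) = 0 ∧ conicForm d (quadraticCremona v) = 0) ∧
    (v ≠ 0 → ∀ w : Fin 3 → ℝ, (∀ i, w i ≠ 0) → conicForm c w = 0 → conicForm d w = 0 →
      ∃ lam : ℝ, lam ≠ 0 ∧ w = lam • quadraticCremona v)
  have hv : v = c ⨯₃ d := cross3_eq_crossProduct c d
  refine ⟨⟨?_, ?_⟩, fun hv0 w hw hcw hdw => ?_⟩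
  · rw [conicForm_quadraticCremona, hv, dot_self_cross, mul_zero]
  · rw [conicForm_quadraticCremona, hv, dot_cross_self, mul_zero]
  rw [conicForm_eq_dotProduct_quadraticCremona] at hcw hdw
  obtain ⟨μ, hμ⟩ := exists_smul_crossProduct_eq_of_dotProduct_eq_zero (hv ▸ hv0) hcw hdw
  have hμ0 : μ ≠ 0 := by
    rintro rfl
    exact quadraticCremona_ne_zero hw (by rw [← hμ, zero_smul])
  have hw012 : w 0 * w 1 * w 2 ≠ 0 := mul_ne_zero (mul_ne_zero (hw 0) (hw 1)) (hw 2)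
  have hcremona : (w 0 * w 1 * w 2) • w = μ ^ 2 • quadraticCremona v := by
    rw [← quadraticCremona_quadraticCremona, ← hμ, hv, quadraticCremona_smul]
  refine ⟨(w 0 * w 1 * w 2)⁻¹ * μ ^ 2, mul_ne_zero (inv_ne_zero hw012) (pow_ne_zero 2 hμ0), ?_⟩
  rw [mul_smul, ← hcremona, smul_smul, inv_mul_cancel₀ hw012, one_smul]
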